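/- Let ξ̄ > 0, let g : ℝ → ℝ be Lipschitz with constant L > 0, let J⁻ ⊆ [0,ξ̄] be a measurable set, let Z̄ ∈ L¹([0,ξ̄]), and define Φ(η,z) = min(z,0) if η ∈ J⁻ and Φ(η,z) = z otherwise. For continuous maps Y : [0,∞) → L¹([0,ξ̄]) with finite weighted norm ‖Y‖_* = sup_{t≥0} e^{−Lξ̄t} ∫₀^{ξ̄} |Y(t,ξ)| dξ, define the transformation (𝒯Y)(t,ξ) = Z̄(ξ) + ∫₀^t (1/2)·g( ∫₀^ξ Φ(η, Y(s,η)) dη ) ds. Then for any two such maps Y, Ỹ one has ‖𝒯Y − 𝒯Ỹ‖_* ≤ (1/2)·‖Y − Ỹ‖_*, i.e. 𝒯 is a strict contraction. -/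

import Mathlib

open MeasureTheory Set Real
open scoped Classical

/-- The truncation `Φ(η,z) = min(z,0)` on `J⁻` and `Φ(η,z) = z` elsewhere. -/
noncomputable def dissPhi (Jm : Set ℝ) (η z : ℝ) : ℝ :=
  if η ∈ Jm then min z 0 else z

/-- The transformation `(𝒯Y)(t,ξ) = Z̄(ξ) + ∫₀^t (1/2)·g(∫₀^ξ Φ(η,Y(s,η)) dη) ds`
of the dissipative-solutions construction. -/
noncomputable def dissT (Jm : Set ℝ) (Zbar : ℝ → ℝ) (g : ℝ → ℝ)
    (Y : ℝ → ℝ → ℝ) (t ξ : ℝ) : ℝ :=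
  Zbar ξ + ∫ s in (0:ℝ)..t, (1 / 2) * g (∫ η in (0:ℝ)..ξ, dissPhi Jm η (Y s η))

/-- The weighted `L¹`-norm `‖Y‖_* = sup_{t ≥ 0} e^{-Lξ̄t} ∫₀^{ξ̄} |Y(t,ξ)| dξ`. -/
noncomputable def dissNorm (ξbar L : ℝ) (Y : ℝ → ℝ → ℝ) : ℝ :=
  sSup {r : ℝ | ∃ t : ℝ, 0 ≤ t ∧
    r = Real.exp (-(L * ξbar * t)) * ∫ ξ in (0:ℝ)..ξbar, |Y t ξ|}

/-!
Each `Φ(η, ·)` is 1-Lipschitz, so for `0 ≤ ξ ≤ ξ̄` the inner integrals of `𝒯Y` and `𝒯Ỹ` differ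
by at most `∫₀^ξ̄ |Y(s) - Ỹ(s)| ≤ ‖Y - Ỹ‖_* e^{Lξ̄s}`, and the integrands in `s` by at most
`(L/2) ‖Y - Ỹ‖_* e^{Lξ̄s}`. Integrating in `s` gives
`|𝒯Y - 𝒯Ỹ|(t,ξ) ≤ ‖Y - Ỹ‖_* (e^{Lξ̄t} - 1) / (2ξ̄)`; integrating this over `[0,ξ̄]` and
multiplying by `e^{-Lξ̄t}` leaves `‖Y - Ỹ‖_* (1 - e^{-Lξ̄t}) / 2 ≤ ‖Y - Ỹ‖_* / 2`.
-/

open Filter Topology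

lemma abs_dissPhi_sub_dissPhi_le (Jm : Set ℝ) (η z w : ℝ) :
    |dissPhi Jm η z - dissPhi Jm η w| ≤ |z - w| := by
  unfold dissPhi
  split_ifs
  · simpa using abs_min_sub_min_le_max z 0 w 0
  · exact le_rfl

lemma integrableOn_dissPhi {Jm : Set ℝ} (hJm : MeasurableSet Jm) {f : ℝ → ℝ} {s : Set ℝ}
    (hf : IntegrableOn f s) : IntegrableOn (fun η => dissPhi Jm η (f η)) s := by
  have h : (fun η => dissPhi Jm η (f η))
      = fun η => f η - Jm.indicator (fun η => max (f η) 0) η := by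
    funext η
    by_cases hη : η ∈ Jm
    · simp only [dissPhi, hη, if_true, indicator_of_mem hη]
      linarith [min_add_max (f η) 0]
    · simp [dissPhi, hη]
  rw [h]
  exact hf.sub (hf.pos_part.indicator hJm)

lemma abs_integral_dissPhi_sub_le {Jm : Set ℝ} (hJm : MeasurableSet Jm) {ξ ξbar : ℝ}
    (hξ₀ : 0 ≤ ξ) (hξ : ξ ≤ ξbar) {f₁ f₂ : ℝ → ℝ} (h₁ : IntegrableOn f₁ (Icc 0 ξbar))
    (h₂ : IntegrableOn f₂ (Icc 0 ξbar)) :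
    |(∫ η in (0:ℝ)..ξ, dissPhi Jm η (f₁ η)) - ∫ η in (0:ℝ)..ξ, dissPhi Jm η (f₂ η)|
      ≤ ∫ η in (0:ℝ)..ξbar, |f₁ η - f₂ η| := by
  have hsub : uIcc 0 ξ ⊆ Icc 0 ξbar := by
    rw [uIcc_of_le hξ₀]; exact Icc_subset_Icc le_rfl hξ
  have hdiff : IntegrableOn (fun η => |f₁ η - f₂ η|) (Icc 0 ξbar) := (h₁.sub h₂).abs
  rw [← intervalIntegral.integral_sub
    ((integrableOn_dissPhi hJm h₁).mono_set hsub).intervalIntegrable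
    ((integrableOn_dissPhi hJm h₂).mono_set hsub).intervalIntegrable]
  calc _ ≤ ∫ η in (0:ℝ)..ξ, |f₁ η - f₂ η| := by
        simp only [← Real.norm_eq_abs]
        exact intervalIntegral.norm_integral_le_of_norm_le hξ₀
          (ae_of_all _ fun η _ => abs_dissPhi_sub_dissPhi_le Jm η (f₁ η) (f₂ η))
          (hdiff.mono_set hsub).intervalIntegrable
    _ ≤ ∫ η in (0:ℝ)..ξbar, |f₁ η - f₂ η| :=
        intervalIntegral.integral_mono_interval le_rfl hξ₀ hξ
          (ae_of_all _ fun _ => abs_nonneg _)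
          (hdiff.mono_set (uIcc_of_le (hξ₀.trans hξ)).subset).intervalIntegrable

lemma continuousOn_integral_dissPhi {Jm : Set ℝ} (hJm : MeasurableSet Jm) {ξ ξbar : ℝ}
    (hξ₀ : 0 ≤ ξ) (hξ : ξ ≤ ξbar) {f : ℝ → ℝ → ℝ}
    (hint : ∀ s, 0 ≤ s → IntegrableOn (f s) (Icc 0 ξbar))
    (hcont : ∀ s₀, 0 ≤ s₀ →
      Tendsto (fun s => ∫ η in (0:ℝ)..ξbar, |f s η - f s₀ η|) (𝓝[Ici 0] s₀) (𝓝 0)) :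
    ContinuousOn (fun s => ∫ η in (0:ℝ)..ξ, dissPhi Jm η (f s η)) (Ici 0) := by
  intro s₀ hs₀
  rw [ContinuousWithinAt, tendsto_iff_dist_tendsto_zero]
  refine squeeze_zero' (Eventually.of_forall fun _ => dist_nonneg) ?_ (hcont s₀ hs₀)
  filter_upwards [self_mem_nhdsWithin] with s hs
  exact abs_integral_dissPhi_sub_le hJm hξ₀ hξ (hint s hs) (hint s₀ hs₀)

lemma abs_integral_le_of_abs_le_mul_exp {F : ℝ → ℝ} {K c t : ℝ} (hc : c ≠ 0) (ht : 0 ≤ t)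
    (hF : ∀ s ∈ Ioc 0 t, |F s| ≤ K * exp (c * s)) :
    |∫ s in (0:ℝ)..t, F s| ≤ K / c * (exp (c * t) - 1) := by
  have hexp : ∫ s in (0:ℝ)..t, K * exp (c * s) = K / c * (exp (c * t) - 1) := by
    rw [intervalIntegral.integral_const_mul,
      intervalIntegral.integral_comp_mul_left (fun x => exp x) hc, integral_exp, mul_zero,
      exp_zero, smul_eq_mul]
    ring
  rw [← hexp, ← Real.norm_eq_abs]
  exact intervalIntegral.norm_integral_le_of_norm_le ht
    (ae_of_all _ fun s hs => (Real.norm_eq_abs (F s)).trans_le (hF s hs))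
    (Continuous.intervalIntegrable (by fun_prop) _ _)

lemma integral_abs_le_mul_of_abs_le {h : ℝ → ℝ} {a C : ℝ} (ha : 0 ≤ a)
    (hh : ∀ x ∈ Ioc 0 a, |h x| ≤ C) :
    ∫ x in (0:ℝ)..a, |h x| ≤ C * a := by
  have hbound := intervalIntegral.norm_integral_le_of_norm_le_const (a := 0) (b := a)
    (f := fun x => |h x|) fun x hx => by
      rw [uIoc_of_le ha] at hx
      simpa using hh x hx
  rw [sub_zero, abs_of_nonneg ha, Real.norm_eq_abs] at hbound
  exact (le_abs_self _).trans hbound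

def HasFiniteDissNorm (ξbar L : ℝ) (Y : ℝ → ℝ → ℝ) : Prop :=
  ∃ B : ℝ, ∀ t : ℝ, 0 ≤ t → exp (-(L * ξbar * t)) * ∫ ξ in (0:ℝ)..ξbar, |Y t ξ| ≤ B

section dissNorm

variable {ξbar L : ℝ} {Y Ytilde : ℝ → ℝ → ℝ}

lemma dissNorm_nonneg (hξbar : 0 ≤ ξbar) : 0 ≤ dissNorm ξbar L Y := by
  refine Real.sSup_nonneg ?_
  rintro r ⟨t, -, rfl⟩
  exact mul_nonneg (exp_pos _).le
    (intervalIntegral.integral_nonneg hξbar fun _ _ => abs_nonneg _)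

lemma dissNorm_le {c : ℝ} (hc : 0 ≤ c)
    (h : ∀ t, 0 ≤ t → exp (-(L * ξbar * t)) * ∫ ξ in (0:ℝ)..ξbar, |Y t ξ| ≤ c) :
    dissNorm ξbar L Y ≤ c := by
  refine Real.sSup_le ?_ hc
  rintro r ⟨t, ht, rfl⟩
  exact h t ht

lemma integral_abs_le_dissNorm_mul_exp (hY : HasFiniteDissNorm ξbar L Y) {t : ℝ} (ht : 0 ≤ t) :
    ∫ ξ in (0:ℝ)..ξbar, |Y t ξ| ≤ dissNorm ξbar L Y * exp (L * ξbar * t) := by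
  obtain ⟨B, hB⟩ := hY
  have hle : exp (-(L * ξbar * t)) * ∫ ξ in (0:ℝ)..ξbar, |Y t ξ| ≤ dissNorm ξbar L Y :=
    le_csSup ⟨B, by rintro r ⟨s, hs, rfl⟩; exact hB s hs⟩ ⟨t, ht, rfl⟩
  rwa [exp_neg, inv_mul_le_iff₀ (exp_pos _), mul_comm] at hle

lemma HasFiniteDissNorm.sub (hξbar : 0 ≤ ξbar)
    (hYint : ∀ t, 0 ≤ t → IntegrableOn (Y t) (Icc 0 ξbar))
    (hYtint : ∀ t, 0 ≤ t → IntegrableOn (Ytilde t) (Icc 0 ξbar))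
    (hY : HasFiniteDissNorm ξbar L Y) (hYt : HasFiniteDissNorm ξbar L Ytilde) :
    HasFiniteDissNorm ξbar L (fun t ξ => Y t ξ - Ytilde t ξ) := by
  obtain ⟨B, hB⟩ := hY
  obtain ⟨B', hB'⟩ := hYt
  refine ⟨B + B', fun t ht => ?_⟩
  rw [← uIcc_of_le hξbar] at hYint hYtint
  have hYabs := IntegrableOn.intervalIntegrable (hYint t ht).abs
  have hYtabs := IntegrableOn.intervalIntegrable (hYtint t ht).abs
  have htri : ∫ ξ in (0:ℝ)..ξbar, |Y t ξ - Ytilde t ξ|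
      ≤ (∫ ξ in (0:ℝ)..ξbar, |Y t ξ|) + ∫ ξ in (0:ℝ)..ξbar, |Ytilde t ξ| := by
    rw [← intervalIntegral.integral_add hYabs hYtabs]
    exact intervalIntegral.integral_mono_on hξbar
      (IntegrableOn.intervalIntegrable ((hYint t ht).sub (hYtint t ht)).abs) (hYabs.add hYtabs)
      fun ξ _ => abs_sub _ _
  calc _ ≤ exp (-(L * ξbar * t))
          * ((∫ ξ in (0:ℝ)..ξbar, |Y t ξ|) + ∫ ξ in (0:ℝ)..ξbar, |Ytilde t ξ|) :=
        mul_le_mul_of_nonneg_left htri (exp_pos _).le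
    _ ≤ B + B' := by rw [mul_add]; exact add_le_add (hB t ht) (hB' t ht)

end dissNorm

section contraction

variable {ξbar L : ℝ} {g : ℝ → ℝ} {Jm : Set ℝ} {Zbar : ℝ → ℝ} {Y Ytilde : ℝ → ℝ → ℝ}

lemma intervalIntegrable_dissT_integrand (hg : Continuous g) (hJm : MeasurableSet Jm)
    {ξ : ℝ} (hξ₀ : 0 ≤ ξ) (hξ : ξ ≤ ξbar)
    (hint : ∀ s, 0 ≤ s → IntegrableOn (Y s) (Icc 0 ξbar))
    (hcont : ∀ s₀, 0 ≤ s₀ →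
      Tendsto (fun s => ∫ η in (0:ℝ)..ξbar, |Y s η - Y s₀ η|) (𝓝[Ici 0] s₀) (𝓝 0))
    {t : ℝ} (ht : 0 ≤ t) :
    IntervalIntegrable (fun s => (1 / 2) * g (∫ η in (0:ℝ)..ξ, dissPhi Jm η (Y s η)))
      volume 0 t := by
  refine ContinuousOn.intervalIntegrable ?_
  rw [uIcc_of_le ht]
  exact ((continuous_const.mul hg).comp_continuousOn
    (continuousOn_integral_dissPhi hJm hξ₀ hξ hint hcont)).mono Icc_subset_Ici_self

lemma abs_dissT_sub_dissT_le (hξbar : 0 < ξbar) (hL : 0 < L)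
    (hg : ∀ a b : ℝ, |g a - g b| ≤ L * |a - b|) (hJm : MeasurableSet Jm)
    (hYint : ∀ t, 0 ≤ t → IntegrableOn (Y t) (Icc 0 ξbar))
    (hYtint : ∀ t, 0 ≤ t → IntegrableOn (Ytilde t) (Icc 0 ξbar))
    (hYcont : ∀ t₀, 0 ≤ t₀ →
      Tendsto (fun t => ∫ ξ in (0:ℝ)..ξbar, |Y t ξ - Y t₀ ξ|) (𝓝[Ici 0] t₀) (𝓝 0))
    (hYtcont : ∀ t₀, 0 ≤ t₀ →
      Tendsto (fun t => ∫ ξ in (0:ℝ)..ξbar, |Ytilde t ξ - Ytilde t₀ ξ|) (𝓝[Ici 0] t₀) (𝓝 0))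
    (hbdd : HasFiniteDissNorm ξbar L (fun t ξ => Y t ξ - Ytilde t ξ))
    {t ξ : ℝ} (ht : 0 ≤ t) (hξ₀ : 0 ≤ ξ) (hξ : ξ ≤ ξbar) :
    |dissT Jm Zbar g Y t ξ - dissT Jm Zbar g Ytilde t ξ|
      ≤ dissNorm ξbar L (fun t ξ => Y t ξ - Ytilde t ξ) / (2 * ξbar)
          * (exp (L * ξbar * t) - 1) := by
  set N := dissNorm ξbar L (fun t ξ => Y t ξ - Ytilde t ξ)
  have hgc : Continuous g := by
    refine (LipschitzWith.of_dist_le_mul (K := L.toNNReal) fun a b => ?_).continuous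
    rw [Real.dist_eq, Real.dist_eq, Real.coe_toNNReal L hL.le]
    exact hg a b
  have hsplit : dissT Jm Zbar g Y t ξ - dissT Jm Zbar g Ytilde t ξ
      = ∫ s in (0:ℝ)..t, ((1 / 2) * g (∫ η in (0:ℝ)..ξ, dissPhi Jm η (Y s η))
          - (1 / 2) * g (∫ η in (0:ℝ)..ξ, dissPhi Jm η (Ytilde s η))) := by
    rw [dissT, dissT, add_sub_add_left_eq_sub, ← intervalIntegral.integral_sub
      (intervalIntegrable_dissT_integrand hgc hJm hξ₀ hξ hYint hYcont ht)
      (intervalIntegrable_dissT_integrand hgc hJm hξ₀ hξ hYtint hYtcont ht)]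
  have hconst : L * N / 2 / (L * ξbar) = N / (2 * ξbar) := by
    field_simp
  rw [hsplit, ← hconst]
  refine abs_integral_le_of_abs_le_mul_exp (by positivity) ht fun s hs => ?_
  calc _ = 1 / 2 * |g (∫ η in (0:ℝ)..ξ, dissPhi Jm η (Y s η))
          - g (∫ η in (0:ℝ)..ξ, dissPhi Jm η (Ytilde s η))| := by
        rw [← mul_sub, abs_mul, abs_of_pos one_half_pos]
    _ ≤ 1 / 2 * (L * ∫ η in (0:ℝ)..ξbar, |Y s η - Ytilde s η|) := by
        gcongr
        exact (hg _ _).trans (mul_le_mul_of_nonneg_left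
          (abs_integral_dissPhi_sub_le hJm hξ₀ hξ (hYint s hs.1.le) (hYtint s hs.1.le)) hL.le)
    _ ≤ 1 / 2 * (L * (N * exp (L * ξbar * s))) := by
        gcongr
        exact integral_abs_le_dissNorm_mul_exp hbdd hs.1.le
    _ = L * N / 2 * exp (L * ξbar * s) := by ring

end contraction

theorem stmt13 (ξbar L : ℝ) (hξbar : 0 < ξbar) (hL : 0 < L)
    (g : ℝ → ℝ) (hg : ∀ a b : ℝ, |g a - g b| ≤ L * |a - b|)
    (Jm : Set ℝ) (hJm : MeasurableSet Jm)
    (Zbar : ℝ → ℝ)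
    (Y Ytilde : ℝ → ℝ → ℝ)
    (hYint : ∀ t : ℝ, 0 ≤ t → IntegrableOn (Y t) (Set.Icc 0 ξbar))
    (hYtint : ∀ t : ℝ, 0 ≤ t → IntegrableOn (Ytilde t) (Set.Icc 0 ξbar))
    (hYcont : ∀ t₀ : ℝ, 0 ≤ t₀ →
      Filter.Tendsto (fun t => ∫ ξ in (0:ℝ)..ξbar, |Y t ξ - Y t₀ ξ|)
        (nhdsWithin t₀ (Set.Ici 0)) (nhds 0))
    (hYtcont : ∀ t₀ : ℝ, 0 ≤ t₀ →
      Filter.Tendsto (fun t => ∫ ξ in (0:ℝ)..ξbar, |Ytilde t ξ - Ytilde t₀ ξ|)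
        (nhdsWithin t₀ (Set.Ici 0)) (nhds 0))
    (hYbdd : ∃ B : ℝ, ∀ t : ℝ, 0 ≤ t →
      Real.exp (-(L * ξbar * t)) * ∫ ξ in (0:ℝ)..ξbar, |Y t ξ| ≤ B)
    (hYtbdd : ∃ B : ℝ, ∀ t : ℝ, 0 ≤ t →
      Real.exp (-(L * ξbar * t)) * ∫ ξ in (0:ℝ)..ξbar, |Ytilde t ξ| ≤ B) :
    dissNorm ξbar L (fun t ξ => dissT Jm Zbar g Y t ξ - dissT Jm Zbar g Ytilde t ξ) ≤
      (1 / 2) * dissNorm ξbar L (fun t ξ => Y t ξ - Ytilde t ξ) := by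
  have hbdd := HasFiniteDissNorm.sub hξbar.le hYint hYtint hYbdd hYtbdd
  set N := dissNorm ξbar L (fun t ξ => Y t ξ - Ytilde t ξ)
  have hN : 0 ≤ N := dissNorm_nonneg hξbar.le
  refine dissNorm_le (by positivity) fun t ht => ?_
  set C := N / (2 * ξbar) * (exp (L * ξbar * t) - 1)
  have hintegral : ∫ ξ in (0:ℝ)..ξbar, |dissT Jm Zbar g Y t ξ - dissT Jm Zbar g Ytilde t ξ|
      ≤ C * ξbar :=
    integral_abs_le_mul_of_abs_le hξbar.le fun ξ hξ =>
      abs_dissT_sub_dissT_le hξbar hL hg hJm hYint hYtint hYcont hYtcont hbdd ht hξ.1.le hξ.2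
  calc _ ≤ exp (-(L * ξbar * t)) * (C * ξbar) := by gcongr
    _ = 1 / 2 * N * (1 - exp (-(L * ξbar * t))) := by
        simp only [C, exp_neg]
        field_simp
    _ ≤ 1 / 2 * N := mul_le_of_le_one_right (by positivity) (sub_le_self _ (exp_pos _).le)
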